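/- Let p, g, x ∈ 𝔽₂[t]. The submodule L of 𝔽₂[t]⁴ generated by (1, 0, x, 0) and (0, x, 0, 1) is a Lagrangian for the orthogonal direct sum P_{x²p, g} ⊕ P_{p, x²g}, i.e. for the quadratic form Q(a, b, c, d) = x²p·a² + a·b + g·b² + p·c² + c·d + x²g·d²: Q vanishes on L and L = L^⊥ with respect to the polar form of Q. -/
import Mathlib


/-- The polar form `B(u, v) = Q(u+v) − Q(u) − Q(v)` of a quadratic form `Q`. -/
noncomputable def polar {M : Type*} [AddCommGroup M] (Q : M → Polynomial (ZMod 2))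
    (u v : M) : Polynomial (ZMod 2) :=
  Q (u + v) - Q u - Q v

/-- The orthogonal sum `P_{x²p, g} ⊕ P_{p, x²g}` as a quadratic form on `𝔽₂[t]⁴`:
`Q(a, b, c, d) = x²p·a² + a·b + g·b² + p·c² + c·d + x²g·d²`. -/
noncomputable def Qsum (p g x : Polynomial (ZMod 2))
    (v : Polynomial (ZMod 2) × Polynomial (ZMod 2) ×
      Polynomial (ZMod 2) × Polynomial (ZMod 2)) : Polynomial (ZMod 2) :=
  x ^ 2 * p * v.1 ^ 2 + v.1 * v.2.1 + g * v.2.1 ^ 2 +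
    p * v.2.2.1 ^ 2 + v.2.2.1 * v.2.2.2 + x ^ 2 * g * v.2.2.2 ^ 2

lemma two_eq_zero' : (2 : Polynomial (ZMod 2)) = 0 := by
  have := CharP.cast_eq_zero (Polynomial (ZMod 2)) 2
  exact_mod_cast this

/-- For `p, g, x ∈ 𝔽₂[t]`, the submodule `L` of `𝔽₂[t]⁴` generated by `(1, 0, x, 0)`
and `(0, x, 0, 1)` is a Lagrangian for `P_{x²p, g} ⊕ P_{p, x²g}`. -/
theorem lagrangian_orthogonal_sum (p g x : Polynomial (ZMod 2)) :
    (∀ v ∈ Submodule.span (Polynomial (ZMod 2))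
        {((1 : Polynomial (ZMod 2)), (0 : Polynomial (ZMod 2)), x, (0 : Polynomial (ZMod 2))),
         ((0 : Polynomial (ZMod 2)), x, (0 : Polynomial (ZMod 2)), (1 : Polynomial (ZMod 2)))},
      Qsum p g x v = 0) ∧
    ((Submodule.span (Polynomial (ZMod 2))
        {((1 : Polynomial (ZMod 2)), (0 : Polynomial (ZMod 2)), x, (0 : Polynomial (ZMod 2))),
         ((0 : Polynomial (ZMod 2)), x, (0 : Polynomial (ZMod 2)), (1 : Polynomial (ZMod 2)))} :
        Set (Polynomial (ZMod 2) × Polynomial (ZMod 2) ×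
          Polynomial (ZMod 2) × Polynomial (ZMod 2))) =
      {v | ∀ l ∈ Submodule.span (Polynomial (ZMod 2))
        {((1 : Polynomial (ZMod 2)), (0 : Polynomial (ZMod 2)), x, (0 : Polynomial (ZMod 2))),
         ((0 : Polynomial (ZMod 2)), x, (0 : Polynomial (ZMod 2)), (1 : Polynomial (ZMod 2)))},
        polar (Qsum p g x) v l = 0}) := by
  have htwo := two_eq_zero'
  constructor
  · intro v hv
    rw [Submodule.mem_span_pair] at hv
    obtain ⟨m, n, rfl⟩ := hv
    simp only [Qsum, Prod.smul_mk, Prod.mk_add_mk, smul_eq_mul, mul_one, mul_zero, add_zero,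
      zero_add]
    linear_combination (x ^ 2 * p * m ^ 2 + m * n * x + g * n ^ 2 * x ^ 2) * htwo
  · ext v
    simp only [SetLike.mem_coe, Set.mem_setOf_eq]
    constructor
    · intro hv l hl
      rw [Submodule.mem_span_pair] at hv hl
      obtain ⟨m, n, rfl⟩ := hv
      obtain ⟨s, t, rfl⟩ := hl
      simp only [polar, Qsum, Prod.smul_mk, Prod.mk_add_mk, smul_eq_mul, mul_one, mul_zero,
        add_zero, zero_add, Prod.fst_add, Prod.snd_add]
      linear_combination (x ^ 2 * p * m ^ 2 + m * n * x + g * n ^ 2 * x ^ 2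
        + x ^ 2 * p * s ^ 2 + s * t * x + g * t ^ 2 * x ^ 2
        + x ^ 2 * p * m * s + g * n * x * t * x + p * m * x * s * x + x ^ 2 * g * n * t
        + m * t * x + n * s * x
        - (x * m * n + x * s * t + x ^ 2 * p * m ^ 2 + x ^ 2 * p * s ^ 2
          + x ^ 2 * g * n ^ 2 + x ^ 2 * g * t ^ 2)) * htwo
    · intro hv
      obtain ⟨a, b, c, d⟩ := v
      have h1 := hv (1, 0, x, 0) (Submodule.subset_span (by simp))
      have h2 := hv (0, x, 0, 1) (Submodule.subset_span (by simp))
      simp only [polar, Qsum, Prod.mk_add_mk, add_zero, zero_add] at h1 h2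
      have hb : b = d * x := by
        linear_combination h1 - (a * x ^ 2 * p + c * x * p + d * x) * htwo
      have hc : c = a * x := by
        linear_combination h2 - (a * x + g * b * x + d * x ^ 2 * g) * htwo
      rw [Submodule.mem_span_pair]
      exact ⟨a, d, by simp [Prod.ext_iff, smul_eq_mul, hb, hc, mul_comm]⟩
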